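/- Let $G$ be a finite complex reflection group with an admissible triplet $(g,\zeta,q)$ and $(g,\zeta)$-graded coordinates $z$. Then there exists a set of basic invariants $x = (x^1,\dots,x^n)$ which is compatible with $z$ at $q$, i.e. $\frac{\partial x^\alpha}{\partial z^\beta}(q) = \delta^\alpha_\beta$ for all $1 \leq \alpha,\beta \leq n$. -/

import Mathlib

open MvPolynomial Matrix

noncomputable section

variable {n : ℕ}

/-- Pullback of polynomials along the linear map with matrix `M`:
`(pback M F)(v) = F (M *ᵥ v)`.  The pullback `g^*F` of the paper is `pback (g⁻¹).val F`. -/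
def pback (M : Matrix (Fin n) (Fin n) ℂ) :
    MvPolynomial (Fin n) ℂ →ₐ[ℂ] MvPolynomial (Fin n) ℂ :=
  aeval fun i => ∑ j, C (M i j) * X j

/-- Multi-index partial derivative `∂^a/∂z^a` of a polynomial (in the standard coordinates). -/
def mderiv (a : Fin n → ℕ) (F : MvPolynomial (Fin n) ℂ) : MvPolynomial (Fin n) ℂ :=
  (List.finRange n).foldr (fun i acc => (fun p => pderiv i p)^[a i] acc) F

/-- The linear coordinate `z^α = ∑_j P_{α j} u^j` of the coordinate system given by `P`. -/
def coordPoly (P : GL (Fin n) ℂ) (α : Fin n) : MvPolynomial (Fin n) ℂ :=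
  ∑ j, C (P.val α j) * X j

/-- `∂^a F/∂z^a` evaluated at `q`, where `z = P u` are the coordinates given by `P`. -/
def zderivAt (P : GL (Fin n) ℂ) (a : Fin n → ℕ) (F : MvPolynomial (Fin n) ℂ)
    (q : Fin n → ℂ) : ℂ :=
  eval (P.val *ᵥ q) (mderiv a (pback (P⁻¹).val F))

/-- `g` is a (complex) reflection: it fixes a hyperplane pointwise and is not the identity. -/
def IsReflection (g : GL (Fin n) ℂ) : Prop :=
  g ≠ 1 ∧
    Module.finrank ℂ (LinearMap.range (Matrix.toLin' (g.val - 1))) = 1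

/-- A finite complex reflection group: a finite subgroup generated by its reflections. -/
def IsReflectionGroup (G : Subgroup (GL (Fin n) ℂ)) : Prop :=
  Finite G ∧ Subgroup.closure {g | g ∈ G ∧ IsReflection g} = G

/-- A regular vector: it lies on no reflection hyperplane of `G`. -/
def IsRegularVec (G : Subgroup (GL (Fin n) ℂ)) (q : Fin n → ℂ) : Prop :=
  q ≠ 0 ∧ ∀ g ∈ G, IsReflection g → g.val *ᵥ q ≠ q

/-- A `ζ`-regular element of `G`: its `ζ`-eigenspace contains a regular vector. -/
def IsZetaRegular (G : Subgroup (GL (Fin n) ℂ)) (g : GL (Fin n) ℂ) (ζ : ℂ) : Prop :=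
  g ∈ G ∧ ∃ q, IsRegularVec G q ∧ g.val *ᵥ q = ζ • q

/-- A set of basic invariants of `G` with degrees `d`. -/
structure BasicInvariants (G : Subgroup (GL (Fin n) ℂ)) (d : Fin n → ℕ)
    (x : Fin n → MvPolynomial (Fin n) ℂ) : Prop where
  pos : ∀ α, 0 < d α
  homog : ∀ α, (x α).IsHomogeneous (d α)
  invariant : ∀ g ∈ G, ∀ α, pback (g : GL (Fin n) ℂ).val (x α) = x α
  indep : AlgebraicIndependent ℂ x
  gen : ∀ F : MvPolynomial (Fin n) ℂ, (∀ g ∈ G, pback (g : GL (Fin n) ℂ).val F = F) →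
    F ∈ Algebra.adjoin ℂ (Set.range x)

/-- An admissible triplet `(g, ζ, q)`; the degrees are arranged so that `d 0` is the highest. -/
structure AdmissibleTriplet [NeZero n] (G : Subgroup (GL (Fin n) ℂ)) (d : Fin n → ℕ)
    (g : GL (Fin n) ℂ) (ζ : ℂ) (q : Fin n → ℂ) : Prop where
  prim : IsPrimitiveRoot ζ (d 0)
  reg : IsZetaRegular G g ζ
  regq : IsRegularVec G q
  eig : g.val *ᵥ q = ζ • q

/-- `P` gives a `(g,ζ)`-graded coordinate system: `g^* z^α = ζ^{d_α-1} z^α`. -/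
def GradedCoords (g : GL (Fin n) ℂ) (ζ : ℂ) (d : Fin n → ℕ) (P : GL (Fin n) ℂ) : Prop :=
  ∀ α, pback (g⁻¹).val (coordPoly P α) = C (ζ ^ ((d α : ℤ) - 1)) * coordPoly P α

/-- The multi-index `e_β`. -/
def unitIdx (β : Fin n) : Fin n → ℕ := fun j => if j = β then 1 else 0

/-- `x` is compatible with the coordinate system given by `P` at `q`:
`∂x^α/∂z^β (q) = δ^α_β`. -/
def Compatible (P : GL (Fin n) ℂ) (q : Fin n → ℂ)
    (x : Fin n → MvPolynomial (Fin n) ℂ) : Prop :=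
  ∀ α β, zderivAt P (unitIdx β) (x α) q = if α = β then 1 else 0

/-- `x` is good: the derivatives `∂^a x^α/∂z^a` vanish at `q` for every `a ∈ I_α^{(0)}`. -/
def IsGood [NeZero n] (P : GL (Fin n) ℂ) (q : Fin n → ℂ) (d : Fin n → ℕ)
    (x : Fin n → MvPolynomial (Fin n) ℂ) : Prop :=
  ∀ α (a : Fin n → ℕ), (∑ β, a β * d β) = d α → 2 ≤ ∑ β, a β →
    zderivAt P a (x α) q = 0

/-- Multi-index partial derivative of a function on `ℂ^n`. -/
def mpd (a : Fin n → ℕ) (f : (Fin n → ℂ) → ℂ) : (Fin n → ℂ) → ℂ :=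
  (List.finRange n).foldr
    (fun i acc => (fun g v => fderiv ℂ g v (Pi.single i 1))^[a i] acc) f

/-- `f` is a rational function which is regular at `q`. -/
def RegRat (q : Fin n → ℂ) (f : (Fin n → ℂ) → ℂ) : Prop :=
  ∃ p s : MvPolynomial (Fin n) ℂ, eval q s ≠ 0 ∧
    ∀ v, eval v s ≠ 0 → f v = eval v p / eval v s

/-- Condition `P(i)`: the value at `q` is diagonal and nonvanishing derivatives at `q`
satisfy `a·d + d_β = d_γ + k d_1` with `k ≥ i`. -/
def CondP [NeZero n] (d : Fin n → ℕ) (q : Fin n → ℂ) (i : ℕ)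
    (M : Fin n → Fin n → (Fin n → ℂ) → ℂ) : Prop :=
  (∀ γ β, γ ≠ β → M γ β q = 0) ∧
    ∀ γ β (a : Fin n → ℕ), a ≠ 0 → mpd a (M γ β) q ≠ 0 →
      ∃ k : ℕ, i ≤ k ∧ (∑ α, a α * d α) + d β = d γ + k * d 0

/-- Condition `Q(j,h)`: nonvanishing derivatives at `q` satisfy
`a·d + h + d_β = d_γ + k d_1` with `k ≥ j`. -/
def CondQ [NeZero n] (d : Fin n → ℕ) (q : Fin n → ℂ) (j h : ℕ)
    (M : Fin n → Fin n → (Fin n → ℂ) → ℂ) : Prop :=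
  ∀ γ β (a : Fin n → ℕ), mpd a (M γ β) q ≠ 0 →
    ∃ k : ℕ, j ≤ k ∧ (∑ α, a α * d α) + h + d β = d γ + k * d 0

/-- Entrywise product of matrices of functions. -/
def matMulF (Xm Ym : Fin n → Fin n → (Fin n → ℂ) → ℂ) :
    Fin n → Fin n → (Fin n → ℂ) → ℂ :=
  fun γ β v => ∑ ρ, Xm γ ρ v * Ym ρ β v

/-- The `(γ,β)` entry of the Jacobian matrix `J = (∂x^γ/∂z^β)`, expressed in the
coordinates `z = P u`, as a function on coordinate space. -/
def jacEntry (P : GL (Fin n) ℂ) (x : Fin n → MvPolynomial (Fin n) ℂ) (γ β : Fin n) :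
    (Fin n → ℂ) → ℂ :=
  fun v => eval v (pderiv β (pback (P⁻¹).val (x γ)))
section AuxPB
variable {n : ℕ}

lemma aeval_self_eq_eval (v : Fin n → ℂ) (F : MvPolynomial (Fin n) ℂ) :
    (aeval v : MvPolynomial (Fin n) ℂ →ₐ[ℂ] ℂ) F = eval v F := by
  rw [aeval_def, MvPolynomial.eval, Algebra.algebraMap_self]
  rfl

lemma eval_pback (M : Matrix (Fin n) (Fin n) ℂ) (F : MvPolynomial (Fin n) ℂ) (v : Fin n → ℂ) :
    eval v (pback M F) = eval (M *ᵥ v) F := by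
  have h : (aeval v : MvPolynomial (Fin n) ℂ →ₐ[ℂ] ℂ).comp (pback M) =
      (aeval (M *ᵥ v) : MvPolynomial (Fin n) ℂ →ₐ[ℂ] ℂ) := by
    apply MvPolynomial.algHom_ext
    intro i
    simp [pback, mulVec, dotProduct]
  have h2 := DFunLike.congr_fun h F
  simp only [AlgHom.comp_apply] at h2
  rw [← aeval_self_eq_eval, ← aeval_self_eq_eval, h2]

lemma pback_pback (M N : Matrix (Fin n) (Fin n) ℂ) (F : MvPolynomial (Fin n) ℂ) :
    pback M (pback N F) = pback (N * M) F := by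
  have h : (pback M).comp (pback N) = (pback (N * M) : MvPolynomial (Fin n) ℂ →ₐ[ℂ] _) := by
    apply MvPolynomial.algHom_ext
    intro i
    simp only [pback, AlgHom.comp_apply, aeval_X, map_sum, _root_.map_mul, aeval_C,
      MvPolynomial.algebraMap_eq, Matrix.mul_apply]
    simp only [Finset.mul_sum]
    rw [Finset.sum_comm]
    apply Finset.sum_congr rfl
    intro j _
    rw [Finset.sum_mul]
    apply Finset.sum_congr rfl
    intro k _
    ring
  exact DFunLike.congr_fun h F

lemma pback_one (F : MvPolynomial (Fin n) ℂ) : pback (1 : Matrix (Fin n) (Fin n) ℂ) F = F := by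
  have h : (pback (1 : Matrix (Fin n) (Fin n) ℂ)) = AlgHom.id ℂ _ := by
    apply MvPolynomial.algHom_ext
    intro i
    rw [pback]
    simp only [aeval_X, AlgHom.coe_id, id_eq]
    calc ∑ j, C ((1 : Matrix (Fin n) (Fin n) ℂ) i j) * X j
        = ∑ j, (if i = j then X j else 0) := by
          apply Finset.sum_congr rfl
          intro j _
          by_cases h : i = j <;> simp [Matrix.one_apply, h]
      _ = X i := by simp
  rw [h]; rfl

lemma pback_isHomogeneous (M : Matrix (Fin n) (Fin n) ℂ) {F : MvPolynomial (Fin n) ℂ} {m : ℕ}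
    (hF : F.IsHomogeneous m) : (pback M F).IsHomogeneous m := by
  have := hF.aeval (fun i => ∑ j, C (M i j) * X j)
    (fun i => MvPolynomial.IsHomogeneous.sum _ _ _ fun j _ => isHomogeneous_C_mul_X _ _)
  simpa [pback] using this

lemma pback_X (M : Matrix (Fin n) (Fin n) ℂ) (k : Fin n) :
    pback M (X k) = ∑ l, C (M k l) * X l := by
  simp [pback]

lemma pderiv_pback (M : Matrix (Fin n) (Fin n) ℂ) (F : MvPolynomial (Fin n) ℂ) (i : Fin n) :
    pderiv i (pback M F) = ∑ j, C (M j i) * pback M (pderiv j F) := by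
  induction F using MvPolynomial.induction_on with
  | C a => simp [pback]
  | add p q hp hq =>
      simp only [map_add, hp, hq, ← Finset.sum_add_distrib]
      apply Finset.sum_congr rfl
      intro j _
      ring
  | mul_X p k hp =>
      have hL : (pback M) (p * X k) = pback M p * ∑ j, C (M k j) * X j := by
        simp only [_root_.map_mul]
        congr 1
        simp [pback]
      rw [hL, pderiv_mul]
      have hLk : pderiv i (∑ j, C (M k j) * X j) = C (M k i) := by
        rw [map_sum]
        calc ∑ j, pderiv i (C (M k j) * X j) = ∑ j, (if j = i then C (M k j) else 0) := by
              apply Finset.sum_congr rfl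
              intro j _
              by_cases h : j = i
              · subst h; rw [pderiv_C_mul, pderiv_X_self, mul_one, if_pos rfl]
              · rw [pderiv_C_mul, pderiv_X_of_ne h, mul_zero, if_neg h]
          _ = C (M k i) := by simp
      rw [hLk, hp]
      have hrhs : ∀ j : Fin n, C (M j i) * pback M (pderiv j (p * X k))
          = C (M j i) * (pback M (pderiv j p) * (∑ l, C (M k l) * X l))
            + (if j = k then C (M j i) * pback M p else 0) := by
        intro j
        by_cases hj : j = k
        · subst hj
          rw [pderiv_mul, pderiv_X_self, mul_one, map_add, _root_.map_mul, pback_X, if_pos rfl]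
          ring
        · rw [pderiv_mul, pderiv_X_of_ne (Ne.symm hj), mul_zero, add_zero, _root_.map_mul,
            pback_X, if_neg hj, add_zero]
      rw [Finset.sum_congr rfl fun j _ => hrhs j]
      rw [Finset.sum_add_distrib, Finset.sum_ite_eq' Finset.univ k]
      simp only [Finset.mem_univ, if_true]
      rw [Finset.sum_mul]
      have : ∑ j, C (M j i) * pback M (pderiv j p) * (∑ l, C (M k l) * X l)
          = ∑ j, C (M j i) * (pback M (pderiv j p) * (∑ l, C (M k l) * X l)) := by
        apply Finset.sum_congr rfl; intro j _; ring
      rw [this]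
      ring

lemma pback_C (M : Matrix (Fin n) (Fin n) ℂ) (c : ℂ) : pback M (C c) = C c := by
  simp [pback]

end AuxPB
section AuxHom
variable {n : ℕ}

lemma weight_one_single (i : Fin n) :
    (Finsupp.weight (1 : Fin n → ℕ)) (Finsupp.single i 1) = 1 := by
  rw [Finsupp.weight_apply, Finsupp.sum_single_index] <;> simp

lemma isHomogeneous_pderiv {F : MvPolynomial (Fin n) ℂ} {m : ℕ} (hF : F.IsHomogeneous m)
    (i : Fin n) : (pderiv i F).IsHomogeneous (m - 1) := by
  conv_lhs => rw [F.as_sum]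
  rw [map_sum]
  apply MvPolynomial.IsHomogeneous.sum
  intro d hd
  rw [pderiv_monomial]
  by_cases h0 : d i = 0
  · rw [h0]
    simp only [Nat.cast_zero, mul_zero]
    rw [map_zero]
    exact isHomogeneous_zero _ _ _
  · apply isHomogeneous_monomial
    have hdm : (Finsupp.weight (1 : Fin n → ℕ)) d = m := hF (MvPolynomial.mem_support_iff.mp hd)
    have hle : Finsupp.single i 1 ≤ d := Finsupp.single_le_iff.mpr (Nat.one_le_iff_ne_zero.mpr h0)
    have hsum : (d - Finsupp.single i 1) + Finsupp.single i 1 = d := tsub_add_cancel_of_le hle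
    have hw := congrArg (Finsupp.weight (1 : Fin n → ℕ)) hsum
    rw [map_add, weight_one_single] at hw
    rw [hdm] at hw
    rw [Finsupp.degree_eq_weight_one]
    have e : (Finsupp.weight fun _ : Fin n => (1:ℕ)) (d - Finsupp.single i 1) = (Finsupp.weight (1 : Fin n → ℕ)) (d - Finsupp.single i 1) := rfl
    omega
end AuxHom

section AuxEval
variable {n : ℕ}

lemma eval_smul_homog {F : MvPolynomial (Fin n) ℂ} {m : ℕ} (hF : F.IsHomogeneous m)
    (c : ℂ) (v : Fin n → ℂ) : eval (c • v) F = c ^ m * eval v F := by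
  conv_lhs => rw [F.as_sum]
  conv_rhs => rw [F.as_sum]
  rw [map_sum, map_sum, Finset.mul_sum]
  apply Finset.sum_congr rfl
  intro d hd
  rw [eval_monomial, eval_monomial]
  have hdm : (Finsupp.weight (1 : Fin n → ℕ)) d = m := hF (MvPolynomial.mem_support_iff.mp hd)
  have hdeg : ∑ i ∈ d.support, d i = m := by
    have := Finsupp.degree_eq_weight_one (σ := Fin n) (R := ℕ)
    have h2 : Finsupp.degree d = (Finsupp.weight (1 : Fin n → ℕ)) d := by rw [this]; rfl
    rw [← hdm, ← h2, Finsupp.degree]; rfl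
  rw [Finsupp.prod, Finsupp.prod]
  have hterm : ∀ j ∈ d.support, ((c • v) j) ^ (d j) = c ^ (d j) * (v j) ^ (d j) := by
    intro j _
    rw [Pi.smul_apply, smul_eq_mul, mul_pow]
  rw [Finset.prod_congr rfl hterm, Finset.prod_mul_distrib, Finset.prod_pow_eq_pow_sum, hdeg]
  ring

lemma mderiv_unitIdx (β : Fin n) (F : MvPolynomial (Fin n) ℂ) :
    mderiv (unitIdx β) F = pderiv β F := by
  have key : ∀ l : List (Fin n), l.Nodup →
      ((β ∈ l → List.foldr (fun i acc => (fun p => pderiv i p)^[unitIdx β i] acc) F l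
          = pderiv β F) ∧
       (β ∉ l → List.foldr (fun i acc => (fun p => pderiv i p)^[unitIdx β i] acc) F l = F)) := by
    intro l
    induction l with
    | nil => intro _; exact ⟨fun h => absurd h (List.not_mem_nil (a := β)), fun _ => rfl⟩
    | cons a l ih =>
        intro hnd
        have hal : a ∉ l := (List.nodup_cons.mp hnd).1
        have hl : l.Nodup := (List.nodup_cons.mp hnd).2
        constructor
        · intro hmem
          rcases List.mem_cons.mp hmem with h | h
          · subst h
            rw [List.foldr_cons, (ih hl).2 hal]
            simp [unitIdx]
          · have hba : β ≠ a := fun he => hal (he ▸ h)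
            rw [List.foldr_cons, (ih hl).1 h]
            simp [unitIdx, Ne.symm hba]
        · intro hmem
          have h1 : β ≠ a := fun he => hmem (he ▸ List.mem_cons_self (a := a) (l := l))
          have h2 : β ∉ l := fun hh => hmem (List.mem_cons_of_mem a hh)
          rw [List.foldr_cons, (ih hl).2 h2]
          simp [unitIdx, Ne.symm h1]
  exact (key (List.finRange n) (List.nodup_finRange n)).1 (List.mem_finRange β)

lemma zderivAt_unitIdx (P : GL (Fin n) ℂ) (β : Fin n) (F : MvPolynomial (Fin n) ℂ)
    (q : Fin n → ℂ) :
    zderivAt P (unitIdx β) F q = eval (P.val *ᵥ q) (pderiv β (pback (P⁻¹).val F)) := by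
  rw [zderivAt, mderiv_unitIdx]

end AuxEval
section AuxSpan
variable {n : ℕ}

lemma pderiv_linear_combo (c b : Fin n → ℂ) (j : Fin n) :
    pderiv j (∑ i, C (c i) * (X i - C (b i))) = C (c j) := by
  rw [map_sum]
  calc ∑ i, pderiv j (C (c i) * (X i - C (b i)))
      = ∑ i, (if i = j then C (c i) else 0) := by
        apply Finset.sum_congr rfl
        intro i _
        rw [pderiv_C_mul, map_sub, pderiv_C, sub_zero]
        by_cases h : i = j
        · subst h; rw [pderiv_X_self, mul_one, if_pos rfl]
        · rw [pderiv_X_of_ne h, mul_zero, if_neg h]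
    _ = C (c j) := by simp

lemma grad_mem_span (x₀ : Fin n → MvPolynomial (Fin n) ℂ) (v : Fin n → ℂ)
    {F : MvPolynomial (Fin n) ℂ} (hF : F ∈ Algebra.adjoin ℂ (Set.range x₀)) :
    (fun j => eval v (pderiv j F)) ∈
      Submodule.span ℂ (Set.range fun α => (fun j => eval v (pderiv j (x₀ α)))) := by
  induction hF using Algebra.adjoin_induction with
  | mem p hp =>
      obtain ⟨α, rfl⟩ := hp
      exact Submodule.subset_span ⟨α, rfl⟩
  | algebraMap r =>
      have : (fun j => eval v (pderiv j (algebraMap ℂ (MvPolynomial (Fin n) ℂ) r))) = 0 := by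
        funext j
        rw [MvPolynomial.algebraMap_eq, pderiv_C]
        simp
      rw [this]
      exact Submodule.zero_mem _
  | add p q hp hq ihp ihq =>
      have : (fun j => eval v (pderiv j (p + q)))
          = (fun j => eval v (pderiv j p)) + (fun j => eval v (pderiv j q)) := by
        funext j; simp [map_add]
      rw [this]
      exact Submodule.add_mem _ ihp ihq
  | mul p q hp hq ihp ihq =>
      have : (fun j => eval v (pderiv j (p * q)))
          = eval v q • (fun j => eval v (pderiv j p)) + eval v p • (fun j => eval v (pderiv j q)) := by
        funext j
        simp only [pderiv_mul, map_add, _root_.map_mul, Pi.add_apply, Pi.smul_apply, smul_eq_mul]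
        ring
      rw [this]
      exact Submodule.add_mem _ (Submodule.smul_mem _ _ ihp) (Submodule.smul_mem _ _ ihq)

lemma exists_invariant_gradient [NeZero n] (G : Subgroup (GL (Fin n) ℂ)) [Fintype ↥G]
    (v : Fin n → ℂ) (hfree : ∀ h : ↥G, h ≠ 1 → (h : GL (Fin n) ℂ).val *ᵥ v ≠ v)
    (lam : Fin n → ℂ) :
    ∃ F : MvPolynomial (Fin n) ℂ, (∀ h : ↥G, pback (h : GL (Fin n) ℂ).val F = F) ∧
      ∀ j, eval v (pderiv j F) = lam j := by
  classical
  -- select a separating coordinate for each nontrivial element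
  have hsel : ∀ h : ↥G, ∃ i : Fin n, h ≠ 1 → ((h : GL (Fin n) ℂ).val *ᵥ v) i ≠ v i := by
    intro h
    by_cases hh : h = 1
    · exact ⟨0, fun hc => absurd hh hc⟩
    · obtain ⟨i, hi⟩ := Function.ne_iff.mp (hfree h hh)
      exact ⟨i, fun _ => hi⟩
  choose sel hsel using hsel
  set p : ↥G → (Fin n → ℂ) := fun h => (h : GL (Fin n) ℂ).val *ᵥ v with hp
  set μ : ↥G → MvPolynomial (Fin n) ℂ := fun h =>
    C ((v (sel h) - p h (sel h))⁻¹) * (X (sel h) - C (p h (sel h))) with hμ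
  have hμv : ∀ h : ↥G, h ≠ 1 → eval v (μ h) = 1 := by
    intro h hh
    have hne : v (sel h) - p h (sel h) ≠ 0 := sub_ne_zero.mpr (Ne.symm (hsel h hh))
    simp only [hμ, _root_.map_mul, eval_C, map_sub, eval_X]
    exact inv_mul_cancel₀ hne
  have hμp : ∀ h : ↥G, eval (p h) (μ h) = 0 := by
    intro h
    simp [hμ]
  set L : MvPolynomial (Fin n) ℂ := ∑ i, C (lam i) * (X i - C (v i)) with hL
  have hLv : eval v L = 0 := by simp [hL]
  have hLd : ∀ j, pderiv j L = C (lam j) := fun j => pderiv_linear_combo lam v j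
  set f : MvPolynomial (Fin n) ℂ := L * ∏ h ∈ Finset.univ.erase (1 : ↥G), (μ h) ^ 2 with hf
  -- gradient of f at v is lam
  have hgradfv : ∀ j, eval v (pderiv j f) = lam j := by
    intro j
    rw [hf, pderiv_mul, map_add, _root_.map_mul, _root_.map_mul, hLd, hLv, zero_mul, add_zero,
      eval_C]
    have : eval v (∏ h ∈ Finset.univ.erase (1 : ↥G), (μ h) ^ 2) = 1 := by
      rw [map_prod]
      apply Finset.prod_eq_one
      intro h hh
      rw [map_pow, hμv h (Finset.mem_erase.mp hh).1, one_pow]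
    rw [this, mul_one]
  -- gradient of f vanishes at p h for h ≠ 1
  have hgradfp : ∀ h : ↥G, h ≠ 1 → ∀ j, eval (p h) (pderiv j f) = 0 := by
    intro h hh j
    have hmem : h ∈ Finset.univ.erase (1 : ↥G) := Finset.mem_erase.mpr ⟨hh, Finset.mem_univ h⟩
    have hsplit : f = (μ h) ^ 2 * (L * ∏ g ∈ (Finset.univ.erase (1 : ↥G)).erase h, (μ g) ^ 2) := by
      rw [hf, ← Finset.mul_prod_erase _ _ hmem]
      ring
    rw [hsplit, pderiv_mul, map_add, _root_.map_mul, _root_.map_mul]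
    have e1 : eval (p h) (pderiv j (μ h ^ 2)) = 0 := by
      simp [pderiv_pow, hμp h]
    have e2 : eval (p h) (μ h ^ 2) = 0 := by
      rw [map_pow, hμp h]
      norm_num
    rw [e1, zero_mul, _root_.map_mul, e2, zero_mul, add_zero]
  -- average over the group
  refine ⟨∑ h : ↥G, pback (h : GL (Fin n) ℂ).val f, ?_, ?_⟩
  · intro h₀
    rw [map_sum]
    have hcomp : ∀ h : ↥G, pback (h₀ : GL (Fin n) ℂ).val (pback (h : GL (Fin n) ℂ).val f)
        = pback ((h * h₀ : ↥G) : GL (Fin n) ℂ).val f := by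
      intro h
      rw [pback_pback]
      congr 1
    rw [Finset.sum_congr rfl fun h _ => hcomp h]
    exact Fintype.sum_equiv (Equiv.mulRight h₀) _ _ (fun h => rfl)
  · intro j
    rw [map_sum, map_sum]
    have hterm : ∀ h : ↥G, eval v (pderiv j (pback (h : GL (Fin n) ℂ).val f))
        = ∑ k, (h : GL (Fin n) ℂ).val k j * eval (p h) (pderiv k f) := by
      intro h
      rw [pderiv_pback, map_sum]
      apply Finset.sum_congr rfl
      intro k _
      rw [_root_.map_mul, eval_C, eval_pback]
    rw [Finset.sum_congr rfl fun h _ => hterm h]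
    rw [Finset.sum_eq_single (1 : ↥G)]
    · have hp1 : p (1 : ↥G) = v := by
        simp [hp]
      rw [hp1]
      calc ∑ k, ((1 : ↥G) : GL (Fin n) ℂ).val k j * eval v (pderiv k f)
          = ∑ k, (if k = j then eval v (pderiv k f) else 0) := by
            apply Finset.sum_congr rfl
            intro k _
            have : ((1 : ↥G) : GL (Fin n) ℂ).val k j = if k = j then 1 else 0 := by
              simp [Matrix.one_apply]
            rw [this]
            by_cases h : k = j <;> simp [h]
        _ = lam j := by
            rw [Finset.sum_ite_eq' Finset.univ j]
            simp [hgradfv j]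
    · intro h _ hh
      rw [Finset.sum_eq_zero]
      intro k _
      rw [hgradfp h hh k, mul_zero]
    · intro h
      exact absurd (Finset.mem_univ 1) h

lemma isUnit_jacobian_of_free [NeZero n] (G : Subgroup (GL (Fin n) ℂ)) [Fintype ↥G]
    (d : Fin n → ℕ) (x₀ : Fin n → MvPolynomial (Fin n) ℂ) (hx₀ : BasicInvariants G d x₀)
    (v : Fin n → ℂ) (hfree : ∀ h : ↥G, h ≠ 1 → (h : GL (Fin n) ℂ).val *ᵥ v ≠ v) :
    IsUnit (Matrix.of fun α j => eval v (pderiv j (x₀ α))) := by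
  classical
  set A : Matrix (Fin n) (Fin n) ℂ := Matrix.of fun α j => eval v (pderiv j (x₀ α)) with hA
  have hspan : Submodule.span ℂ (Set.range fun α => (fun j => eval v (pderiv j (x₀ α)))) = ⊤ := by
    rw [Submodule.eq_top_iff']
    intro lam
    obtain ⟨F, hFinv, hFgrad⟩ := exists_invariant_gradient G v hfree lam
    have hFadj : F ∈ Algebra.adjoin ℂ (Set.range x₀) :=
      hx₀.gen F (fun h hh => hFinv ⟨h, hh⟩)
    have := grad_mem_span x₀ v hFadj
    have heq : (fun j => eval v (pderiv j F)) = lam := funext hFgrad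
    rwa [heq] at this
  rw [← Matrix.vecMul_surjective_iff_isUnit]
  have hrange : LinearMap.range A.vecMulLinear = ⊤ := by
    rw [range_vecMulLinear, hA]
    exact hspan
  intro y
  obtain ⟨c, hc⟩ := LinearMap.range_eq_top.mp hrange y
  exact ⟨c, by simpa using hc⟩
end AuxSpan
section AuxBi

/-- Bivariate polynomials as iterated polynomials: inner variable `s`, outer variable `t`. -/
abbrev Bi := Polynomial (Polynomial ℂ)

/-- Evaluation of a bivariate polynomial. -/
noncomputable def evB (s t : ℂ) : Bi →+* ℂ :=
  Polynomial.eval₂RingHom (Polynomial.evalRingHom s) t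

lemma evB_CC (s t c : ℂ) : evB s t (Polynomial.C (Polynomial.C c)) = c := by
  simp [evB]

lemma evB_C (s t : ℂ) (p : Polynomial ℂ) : evB s t (Polynomial.C p) = Polynomial.eval s p := by
  simp [evB]

lemma evB_X (s t : ℂ) : evB s t (Polynomial.X : Bi) = t := by
  simp [evB]

lemma evB_CX (s t : ℂ) : evB s t (Polynomial.C (Polynomial.X) : Bi) = s := by
  simp [evB]

/-- The swap of the two variables. -/
noncomputable def swapB : Bi →+* Bi :=
  Polynomial.eval₂RingHom (Polynomial.mapRingHom (Polynomial.C : ℂ →+* Polynomial ℂ))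
    (Polynomial.C Polynomial.X)

lemma swapB_C (p : Polynomial ℂ) : swapB (Polynomial.C p) = p.map Polynomial.C := by
  simp [swapB]

lemma swapB_CC (c : ℂ) : swapB (Polynomial.C (Polynomial.C c)) = Polynomial.C (Polynomial.C c) := by
  rw [swapB_C, Polynomial.map_C]

lemma swapB_X : swapB (Polynomial.X : Bi) = Polynomial.C Polynomial.X := by
  simp [swapB]

lemma swapB_CX : swapB (Polynomial.C Polynomial.X : Bi) = Polynomial.X := by
  rw [swapB_C, Polynomial.map_X]

lemma biRingHom_ext {S : Type} [CommSemiring S] {f g : Bi →+* S}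
    (h1 : ∀ c : ℂ, f (Polynomial.C (Polynomial.C c)) = g (Polynomial.C (Polynomial.C c)))
    (h2 : f (Polynomial.C Polynomial.X) = g (Polynomial.C Polynomial.X))
    (h3 : f Polynomial.X = g Polynomial.X) : f = g := by
  apply Polynomial.ringHom_ext' ?_ h3
  apply Polynomial.ringHom_ext' ?_ h2
  exact RingHom.ext h1

lemma swapB_swapB (φ : Bi) : swapB (swapB φ) = φ := by
  have h : swapB.comp swapB = RingHom.id Bi := by
    apply biRingHom_ext
    · intro c
      rw [RingHom.comp_apply, swapB_CC, swapB_CC, RingHom.id_apply]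
    · rw [RingHom.comp_apply, swapB_CX, swapB_X, RingHom.id_apply]
    · rw [RingHom.comp_apply, swapB_X, swapB_CX, RingHom.id_apply]
  exact DFunLike.congr_fun h φ

lemma swapB_injective : Function.Injective (swapB : Bi → Bi) :=
  Function.LeftInverse.injective swapB_swapB

lemma evB_swapB (s t : ℂ) (φ : Bi) : evB s t (swapB φ) = evB t s φ := by
  have h : (evB s t).comp swapB = evB t s := by
    apply biRingHom_ext
    · intro c
      rw [RingHom.comp_apply, swapB_CC, evB_CC, evB_CC]
    · rw [RingHom.comp_apply, swapB_CX, evB_X, evB_CX]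
    · rw [RingHom.comp_apply, swapB_X, evB_CX, evB_X]
  exact DFunLike.congr_fun h φ

lemma evB_eq_eval_map (s t : ℂ) (φ : Bi) :
    evB s t φ = Polynomial.eval t (φ.map (Polynomial.evalRingHom s)) := by
  rw [evB, Polynomial.coe_eval₂RingHom, Polynomial.eval₂_eq_eval_map]

lemma infinite_zeros {φ : Bi} (h0 : φ ≠ 0)
    (hnc : ¬ ∃ c : ℂ, φ = Polynomial.C (Polynomial.C c)) :
    {y : ℂ × ℂ | evB y.1 y.2 φ = 0}.Infinite := by
  by_cases hd : φ.natDegree = 0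
  · obtain ⟨p, rfl⟩ := Polynomial.natDegree_eq_zero.mp hd
    have hpnc : p.natDegree ≠ 0 := by
      intro h
      obtain ⟨c, rfl⟩ := Polynomial.natDegree_eq_zero.mp h
      exact hnc ⟨c, rfl⟩
    obtain ⟨s₀, hs₀⟩ := Complex.exists_root
      (Polynomial.natDegree_pos_iff_degree_pos.mp (Nat.pos_of_ne_zero hpnc))
    apply Set.infinite_of_injective_forall_mem (f := fun t : ℂ => ((s₀ : ℂ), t))
    · intro a b hab
      simpa [Prod.ext_iff] using hab
    · intro t
      simp only [Set.mem_setOf_eq, evB_C]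
      exact hs₀
  · have hc0 : φ.leadingCoeff ≠ 0 := Polynomial.leadingCoeff_ne_zero.mpr h0
    have hSinf : {s : ℂ | Polynomial.eval s φ.leadingCoeff ≠ 0}.Infinite := by
      have hfin : {s : ℂ | Polynomial.eval s φ.leadingCoeff = 0}.Finite :=
        Polynomial.finite_setOf_isRoot hc0
      have heq : {s : ℂ | Polynomial.eval s φ.leadingCoeff ≠ 0}
          = {s : ℂ | Polynomial.eval s φ.leadingCoeff = 0}ᶜ := by
        ext s; simp
      rw [heq]
      exact hfin.infinite_compl
    intro hZfin
    have hsub : {s : ℂ | Polynomial.eval s φ.leadingCoeff ≠ 0}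
        ⊆ Prod.fst '' {y : ℂ × ℂ | evB y.1 y.2 φ = 0} := by
      intro s hs
      have hdeg : (φ.map (Polynomial.evalRingHom s)).natDegree = φ.natDegree :=
        Polynomial.natDegree_map_of_leadingCoeff_ne_zero _ hs
      have hψpos : 0 < (φ.map (Polynomial.evalRingHom s)).degree := by
        rw [← Polynomial.natDegree_pos_iff_degree_pos, hdeg]
        exact Nat.pos_of_ne_zero hd
      obtain ⟨t, ht⟩ := Complex.exists_root hψpos
      refine ⟨(s, t), ?_, rfl⟩
      simp only [Set.mem_setOf_eq, evB_eq_eval_map]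
      exact ht
    exact (hZfin.image _).not_infinite (hSinf.mono hsub)

/-- The polynomial of the affine line `c + a s + b t = 0`. -/
noncomputable def lineB (c a b : ℂ) : Bi :=
  Polynomial.C (Polynomial.C c + Polynomial.C a * Polynomial.X) +
    Polynomial.C (Polynomial.C b) * Polynomial.X

lemma evB_lineB (s t c a b : ℂ) : evB s t (lineB c a b) = c + a * s + b * t := by
  simp only [lineB, map_add, _root_.map_mul, evB_C, evB_X]
  simp

lemma lineB_natDegree_pos {c a b : ℂ} (hb : b ≠ 0) : 1 ≤ (lineB c a b).natDegree := by
  apply Polynomial.le_natDegree_of_ne_zero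
  rw [lineB]
  rw [Polynomial.coeff_add, Polynomial.coeff_C, Polynomial.coeff_C_mul, Polynomial.coeff_X_one]
  simpa using Polynomial.C_ne_zero.mpr hb

lemma lineB_ne_zero {c a b : ℂ} (hc : c ≠ 0) : lineB c a b ≠ 0 := by
  intro h
  have h2 := evB_lineB 0 0 c a b
  rw [h, map_zero] at h2
  apply hc
  have := h2.symm
  simpa using this

lemma eval_eval_rho (s : ℂ) (ρ : Polynomial ℂ) (φ : Bi) :
    Polynomial.eval s (Polynomial.eval ρ φ) = evB s (Polynomial.eval s ρ) φ := by
  have h : (Polynomial.evalRingHom s).comp (Polynomial.evalRingHom ρ)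
      = evB s (Polynomial.eval s ρ) := by
    apply biRingHom_ext
    · intro c
      rw [RingHom.comp_apply]
      simp [evB_CC]
    · rw [RingHom.comp_apply]
      simp [evB_CX]
    · rw [RingHom.comp_apply]
      simp [evB_X]
  exact DFunLike.congr_fun h φ

lemma lineB_dvd {φ : Bi} {c a b : ℂ} (hb : b ≠ 0)
    (hinf : {y : ℂ × ℂ | evB y.1 y.2 φ = 0 ∧ c + a * y.1 + b * y.2 = 0}.Infinite) :
    lineB c a b ∣ φ := by
  set ρ : Polynomial ℂ := Polynomial.C (-c/b) + Polynomial.C (-a/b) * Polynomial.X with hρ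
  have hbρ : (Polynomial.C b) * ρ = Polynomial.C (-c) + Polynomial.C (-a) * Polynomial.X := by
    have e1 : b * (-c/b) = -c := by rw [mul_comm, div_mul_cancel₀ _ hb]
    have e2 : b * (-a/b) = -a := by rw [mul_comm, div_mul_cancel₀ _ hb]
    rw [hρ, mul_add, ← mul_assoc, ← Polynomial.C_mul, ← Polynomial.C_mul, e1, e2]
  have hfac : lineB c a b = Polynomial.C (Polynomial.C b) * (Polynomial.X - Polynomial.C ρ) := by
    rw [mul_sub, ← Polynomial.C_mul, hbρ, lineB]
    have hneg : Polynomial.C (-c) + Polynomial.C (-a) * Polynomial.X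
        = -(Polynomial.C c + Polynomial.C a * Polynomial.X) := by
      simp [Polynomial.C_neg]
      ring
    rw [hneg, map_neg, sub_neg_eq_add, add_comm]
  -- the remainder vanishes
  have hρs : ∀ y : ℂ × ℂ, c + a * y.1 + b * y.2 = 0 → Polynomial.eval y.1 ρ = y.2 := by
    intro y hy
    rw [hρ]
    simp only [Polynomial.eval_add, Polynomial.eval_mul, Polynomial.eval_C, Polynomial.eval_X]
    rw [div_mul_eq_mul_div, ← add_div, div_eq_iff hb]
    linear_combination -hy
  have hr : Polynomial.eval ρ φ = 0 := by
    apply Polynomial.eq_zero_of_infinite_isRoot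
    have hIJ : Set.InjOn Prod.fst {y : ℂ × ℂ | evB y.1 y.2 φ = 0 ∧ c + a * y.1 + b * y.2 = 0} := by
      intro y hy z hz hyz
      have h1 := hρs y hy.2
      have h2 := hρs z hz.2
      have : y.2 = z.2 := by rw [← h1, ← h2, hyz]
      exact Prod.ext hyz this
    have himg := hinf.image hIJ
    apply Set.Infinite.mono ?_ himg
    rintro s ⟨y, ⟨hy1, hy2⟩, rfl⟩
    simp only [Set.mem_setOf_eq, Polynomial.IsRoot]
    rw [eval_eval_rho, hρs y hy2]
    exact hy1
  have hdvd : (Polynomial.X - Polynomial.C ρ) ∣ φ := Polynomial.dvd_iff_isRoot.mpr hr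
  obtain ⟨H, hH⟩ := hdvd
  refine ⟨Polynomial.C (Polynomial.C b⁻¹) * H, ?_⟩
  rw [hfac, hH]
  have : Polynomial.C (Polynomial.C b) * (Polynomial.X - Polynomial.C ρ)
      * (Polynomial.C (Polynomial.C b⁻¹) * H)
      = (Polynomial.C (Polynomial.C b) * Polynomial.C (Polynomial.C b⁻¹))
        * ((Polynomial.X - Polynomial.C ρ) * H) := by ring
  rw [this, ← Polynomial.C_mul, ← Polynomial.C_mul, mul_inv_cancel₀ hb]
  simp

lemma exists_avoid (L : Finset (ℂ × ℂ × ℂ)) (hL : ∀ p ∈ L, p.1 ≠ 0) :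
    ∃ s t : ℂ, ¬(s = 0 ∧ t = 0) ∧ ∀ p ∈ L, p.1 + p.2.1 * s + p.2.2 * t ≠ 0 := by
  classical
  obtain ⟨s, hs⟩ := Infinite.exists_notMem_finset
    (insert (0 : ℂ) (L.image fun p => -p.1 / p.2.1))
  obtain ⟨t, ht⟩ := Infinite.exists_notMem_finset (L.image fun p => -(p.1 + p.2.1 * s) / p.2.2)
  have hs0 : s ≠ 0 := fun h => hs (by rw [h]; exact Finset.mem_insert_self 0 _)
  refine ⟨s, t, fun h => hs0 h.1, ?_⟩
  intro p hp heq
  by_cases hb : p.2.2 = 0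
  · rw [hb, zero_mul, add_zero] at heq
    by_cases ha : p.2.1 = 0
    · rw [ha, zero_mul, add_zero] at heq
      exact hL p hp heq
    · apply hs
      apply Finset.mem_insert_of_mem
      apply Finset.mem_image.mpr
      refine ⟨p, hp, ?_⟩
      rw [div_eq_iff ha]
      linear_combination -heq
  · apply ht
    apply Finset.mem_image.mpr
    refine ⟨p, hp, ?_⟩
    rw [div_eq_iff hb]
    linear_combination -heq

lemma bivar_aux : ∀ N : ℕ, ∀ (φ : Bi) (L : Finset (ℂ × ℂ × ℂ)), (∀ p ∈ L, p.1 ≠ 0) →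
    φ.natDegree + (swapB φ).natDegree ≤ N →
    (∀ s t : ℂ, ¬(s = 0 ∧ t = 0) → evB s t φ = 0 →
      ∃ p ∈ L, p.1 + p.2.1 * s + p.2.2 * t = 0) →
    evB 0 0 φ ≠ 0 := by
  intro N
  induction N using Nat.strong_induction_on with
  | _ N ih =>
  intro φ L hL hdeg hcov
  by_cases hconst : ∃ c : ℂ, φ = Polynomial.C (Polynomial.C c)
  · obtain ⟨c, rfl⟩ := hconst
    rw [evB_CC]
    intro hc0
    subst hc0
    obtain ⟨s, t, hst, hav⟩ := exists_avoid L hL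
    obtain ⟨p, hpL, hp⟩ := hcov s t hst (by simp)
    exact hav p hpL hp
  · have hφ0 : φ ≠ 0 := fun h => hconst ⟨0, by simp [h]⟩
    intro h00
    have hinf := infinite_zeros hφ0 hconst
    have hsub : {y : ℂ × ℂ | evB y.1 y.2 φ = 0} \ {((0 : ℂ), (0 : ℂ))} ⊆
        ⋃ p ∈ L, {y : ℂ × ℂ | evB y.1 y.2 φ = 0 ∧ p.1 + p.2.1 * y.1 + p.2.2 * y.2 = 0} := by
      rintro ⟨s, t⟩ ⟨hz, hne⟩
      have hne' : ¬(s = 0 ∧ t = 0) := by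
        intro ⟨h1, h2⟩
        exact hne (by simp [h1, h2])
      obtain ⟨p, hpL, hp⟩ := hcov s t hne' hz
      exact Set.mem_biUnion hpL ⟨hz, hp⟩
    have hinf2 := (hinf.diff (Set.finite_singleton _)).mono hsub
    have hex : ∃ p ∈ L,
        {y : ℂ × ℂ | evB y.1 y.2 φ = 0 ∧ p.1 + p.2.1 * y.1 + p.2.2 * y.2 = 0}.Infinite := by
      by_contra hall
      push_neg at hall
      exact (Set.Finite.biUnion L.finite_toSet hall).not_infinite hinf2
    obtain ⟨p, hpL, hpinf⟩ := hex
    obtain ⟨c, a, b⟩ := p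
    simp only at hpinf
    have hc : c ≠ 0 := hL _ hpL
    have hab : ¬(a = 0 ∧ b = 0) := by
      rintro ⟨rfl, rfl⟩
      apply hpinf.nonempty.elim
      rintro y ⟨-, hy⟩
      simp at hy
      exact hc hy
    by_cases hb : b ≠ 0
    · -- divide by the line
      obtain ⟨H, hH⟩ := lineB_dvd hb hpinf
      have hH0 : H ≠ 0 := by
        rintro rfl
        rw [mul_zero] at hH
        exact hφ0 hH
      have hdegH : H.natDegree + (swapB H).natDegree < N := by
        have h1 : φ.natDegree = (lineB c a b).natDegree + H.natDegree := by
          rw [hH, Polynomial.natDegree_mul (lineB_ne_zero hc) hH0]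
        have h2 : (swapB H).natDegree ≤ (swapB φ).natDegree := by
          apply Polynomial.natDegree_le_of_dvd
          · exact ⟨swapB (lineB c a b), by rw [← _root_.map_mul, hH]; ring_nf⟩
          · intro hs0
            exact hφ0 (swapB_injective (by rw [hs0, map_zero]))
        have h3 := lineB_natDegree_pos (c := c) (a := a) hb
        omega
      have hcovH : ∀ s t : ℂ, ¬(s = 0 ∧ t = 0) → evB s t H = 0 →
          ∃ p ∈ L, p.1 + p.2.1 * s + p.2.2 * t = 0 := by
        intro s t hst hH0'
        apply hcov s t hst
        rw [hH, _root_.map_mul, hH0', mul_zero]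
      have := ih _ hdegH H L hL le_rfl hcovH
      apply this
      have h000 := congrArg (evB 0 0) hH
      rw [_root_.map_mul, evB_lineB] at h000
      simp only [mul_zero, add_zero] at h000
      rw [h00] at h000
      rcases mul_eq_zero.mp h000.symm with h | h
      · exact absurd h hc
      · exact h
    · -- swap the variables
      push_neg at hb
      subst hb
      have ha : a ≠ 0 := by
        intro h
        exact hab ⟨h, rfl⟩
      set φ' := swapB φ with hφ'
      have hswapinf : {y : ℂ × ℂ | evB y.1 y.2 φ' = 0 ∧ c + (0:ℂ) * y.1 + a * y.2 = 0}.Infinite := by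
        have himg := hpinf.image (Function.Injective.injOn (Prod.swap_injective (α := ℂ) (β := ℂ)))
        apply Set.Infinite.mono ?_ himg
        rintro y ⟨z, ⟨hz1, hz2⟩, rfl⟩
        constructor
        · rw [hφ', Prod.fst_swap, Prod.snd_swap, evB_swapB]
          exact hz1
        · rw [Prod.fst_swap, Prod.snd_swap]
          linear_combination hz2
      obtain ⟨H, hH⟩ := lineB_dvd ha hswapinf
      have hφ'0 : φ' ≠ 0 := by
        intro h
        exact hφ0 (swapB_injective (by rw [map_zero]; exact h))
      have hH0 : H ≠ 0 := by
        rintro rfl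
        rw [mul_zero] at hH
        exact hφ'0 hH
      have hdegH : H.natDegree + (swapB H).natDegree < N := by
        have h1 : φ'.natDegree = (lineB c 0 a).natDegree + H.natDegree := by
          rw [hH, Polynomial.natDegree_mul (lineB_ne_zero hc) hH0]
        have h2 : (swapB H).natDegree ≤ (swapB φ').natDegree := by
          apply Polynomial.natDegree_le_of_dvd
          · exact ⟨swapB (lineB c 0 a), by rw [← _root_.map_mul, hH]; ring_nf⟩
          · intro hs0
            exact hφ'0 (swapB_injective (by rw [hs0, map_zero]))
        have h3 := lineB_natDegree_pos (c := c) (a := (0:ℂ)) ha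
        have h4 : (swapB φ').natDegree = φ.natDegree := by rw [hφ', swapB_swapB]
        omega
      set L' : Finset (ℂ × ℂ × ℂ) := L.image (fun p => (p.1, p.2.2, p.2.1)) with hL'
      have hL'ne : ∀ p ∈ L', p.1 ≠ 0 := by
        intro p hp
        obtain ⟨q, hq, rfl⟩ := Finset.mem_image.mp hp
        exact hL q hq
      have hcovH : ∀ s t : ℂ, ¬(s = 0 ∧ t = 0) → evB s t H = 0 →
          ∃ p ∈ L', p.1 + p.2.1 * s + p.2.2 * t = 0 := by
        intro s t hst hH0'
        have hφ'st : evB s t φ' = 0 := by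
          rw [hH, _root_.map_mul, hH0', mul_zero]
        rw [hφ', evB_swapB] at hφ'st
        have hts : ¬(t = 0 ∧ s = 0) := fun ⟨h1, h2⟩ => hst ⟨h2, h1⟩
        obtain ⟨q, hqL, hq⟩ := hcov t s hts hφ'st
        refine ⟨(q.1, q.2.2, q.2.1), Finset.mem_image.mpr ⟨q, hqL, rfl⟩, ?_⟩
        simp only
        linear_combination hq
      have := ih _ hdegH H L' hL'ne le_rfl hcovH
      apply this
      have h000 := congrArg (evB 0 0) hH
      rw [_root_.map_mul, evB_lineB] at h000
      simp only [mul_zero, add_zero] at h000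
      have h00' : evB 0 0 φ' = 0 := by
        rw [hφ', evB_swapB]
        exact h00
      rw [h00'] at h000
      rcases mul_eq_zero.mp h000.symm with h | h
      · exact absurd h hc
      · exact h

lemma bivar_main (φ : Bi) (L : Finset (ℂ × ℂ × ℂ)) (hL : ∀ p ∈ L, p.1 ≠ 0)
    (hcov : ∀ s t : ℂ, ¬(s = 0 ∧ t = 0) → evB s t φ = 0 →
      ∃ p ∈ L, p.1 + p.2.1 * s + p.2.2 * t = 0) :
    evB 0 0 φ ≠ 0 :=
  bivar_aux (φ.natDegree + (swapB φ).natDegree) φ L hL le_rfl hcov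

end AuxBi
section AuxSteinberg
variable {n : ℕ}

lemma mulvec_fix_iff (A : Matrix (Fin n) (Fin n) ℂ) (x : Fin n → ℂ) :
    x ∈ LinearMap.ker (Matrix.toLin' (A - 1)) ↔ A *ᵥ x = x := by
  rw [LinearMap.mem_ker, Matrix.toLin'_apply, Matrix.sub_mulVec, Matrix.one_mulVec,
    sub_eq_zero]

lemma fix_subspace_small [NeZero n] {g' : GL (Fin n) ℂ} (hne : g' ≠ 1)
    (hnr : ¬ IsReflection g') :
    Module.finrank ℂ (LinearMap.ker (Matrix.toLin' (g'.val - 1))) + 2 ≤ n := by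
  have hval : g'.val - 1 ≠ 0 := by
    intro h
    exact hne (Units.ext (by simpa using sub_eq_zero.mp h))
  have hlin : Matrix.toLin' (g'.val - 1) ≠ 0 := by
    intro h
    exact hval (by simpa using (LinearEquiv.map_eq_zero_iff Matrix.toLin').mp h)
  have h0 : Module.finrank ℂ (LinearMap.range (Matrix.toLin' (g'.val - 1))) ≠ 0 := by
    intro h
    exact hlin (LinearMap.range_eq_bot.mp (Submodule.finrank_eq_zero.mp h))
  have h1 : Module.finrank ℂ (LinearMap.range (Matrix.toLin' (g'.val - 1))) ≠ 1 := by
    intro h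
    exact hnr ⟨hne, h⟩
  have hrn := LinearMap.finrank_range_add_finrank_ker (Matrix.toLin' (g'.val - 1))
  rw [Module.finrank_fin_fun] at hrn
  omega

lemma exists_plane [NeZero n] (𝒮 : Finset (Subspace ℂ (Fin n → ℂ)))
    (h𝒮 : ∀ W ∈ 𝒮, Module.finrank ℂ W + 2 ≤ n) :
    ∃ u w : Fin n → ℂ, ∀ W ∈ 𝒮, ∀ s t : ℂ, s • u + t • w ∈ W → s = 0 ∧ t = 0 := by
  classical
  have htop : (⊤ : Subspace ℂ (Fin n → ℂ)) ∉ 𝒮 := by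
    intro h
    have := h𝒮 ⊤ h
    rw [finrank_top ℂ (Fin n → ℂ), Module.finrank_fin_fun] at this
    omega
  obtain ⟨u, hu⟩ := Set.ne_univ_iff_exists_notMem _ |>.mp
    (Subspace.biUnion_ne_univ_of_top_notMem htop)
  have hu' : ∀ W ∈ 𝒮, u ∉ W := by
    intro W hW huW
    exact hu (Set.mem_biUnion hW huW)
  set 𝒮' : Finset (Subspace ℂ (Fin n → ℂ)) :=
    𝒮.image (fun W => W ⊔ Submodule.span ℂ {u}) with h𝒮'
  have htop' : (⊤ : Subspace ℂ (Fin n → ℂ)) ∉ 𝒮' := by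
    intro h
    obtain ⟨W, hW, hWtop⟩ := Finset.mem_image.mp h
    have hsup : Module.finrank ℂ ↥(W ⊔ Submodule.span ℂ {u}) ≤
        Module.finrank ℂ W + 1 := by
      have heq := Submodule.finrank_sup_add_finrank_inf_eq W (Submodule.span ℂ {u})
      have hspan : Module.finrank ℂ ↥(Submodule.span ℂ ({u} : Set (Fin n → ℂ))) ≤ 1 := by
        have := finrank_span_le_card (R := ℂ) ({u} : Set (Fin n → ℂ))
        simpa using this
      omega
    rw [hWtop, finrank_top ℂ (Fin n → ℂ), Module.finrank_fin_fun] at hsup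
    have := h𝒮 W hW
    omega
  obtain ⟨w, hw⟩ := Set.ne_univ_iff_exists_notMem _ |>.mp
    (Subspace.biUnion_ne_univ_of_top_notMem htop')
  have hw' : ∀ W ∈ 𝒮, w ∉ W ⊔ Submodule.span ℂ {u} := by
    intro W hW hwW
    exact hw (Set.mem_biUnion (Finset.mem_image.mpr ⟨W, hW, rfl⟩) hwW)
  refine ⟨u, w, ?_⟩
  intro W hW s t hmem
  have ht : t = 0 := by
    by_contra ht
    apply hw' W hW
    have hwrep : w = t⁻¹ • (s • u + t • w) - (t⁻¹ * s) • u := by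
      rw [smul_add, smul_smul, smul_smul, inv_mul_cancel₀ ht, one_smul]
      abel
    rw [hwrep]
    apply Submodule.sub_mem
    · exact Submodule.smul_mem _ _ (Submodule.mem_sup_left hmem)
    · exact Submodule.smul_mem _ _ (Submodule.mem_sup_right (Submodule.mem_span_singleton_self u))
  subst ht
  rw [zero_smul, add_zero] at hmem
  refine ⟨?_, rfl⟩
  by_contra hs
  apply hu' W hW
  have hurep : u = s⁻¹ • (s • u) := by rw [smul_smul, inv_mul_cancel₀ hs, one_smul]
  rw [hurep]
  exact Submodule.smul_mem _ _ hmem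

lemma line_for_nonfix (A : Matrix (Fin n) (Fin n) ℂ) (q u w : Fin n → ℂ)
    (hq : A *ᵥ q ≠ q) :
    ∃ cab : ℂ × ℂ × ℂ, cab.1 ≠ 0 ∧ ∀ s t : ℂ,
      A *ᵥ (q + s • u + t • w) = q + s • u + t • w →
        cab.1 + cab.2.1 * s + cab.2.2 * t = 0 := by
  classical
  set cu : Fin n → ℂ := A *ᵥ u - u with hcu
  set cw : Fin n → ℂ := A *ᵥ w - w with hcw
  set bq : Fin n → ℂ := q - A *ᵥ q with hbq
  have hbq0 : bq ≠ 0 := fun h => hq (by rw [hbq, sub_eq_zero] at h; exact h.symm)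
  have hcond : ∀ s t : ℂ, (A *ᵥ (q + s • u + t • w) = q + s • u + t • w) ↔
      s • cu + t • cw = bq := by
    intro s t
    rw [Matrix.mulVec_add, Matrix.mulVec_add, Matrix.mulVec_smul, Matrix.mulVec_smul]
    rw [← sub_eq_zero, ← sub_eq_zero (a := s • cu + t • cw)]
    constructor
    · intro h
      rw [← h]
      rw [hcu, hcw, hbq]
      module
    · intro h
      rw [← h]
      rw [hcu, hcw, hbq]
      module
  by_cases hT : ∃ p₁ p₂ : ℂ, p₁ • cu + p₂ • cw = bq
  · obtain ⟨p₁, p₂, hp⟩ := hT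
    by_cases hK : ∃ k₁ k₂ : ℂ, ¬(k₁ = 0 ∧ k₂ = 0) ∧ k₁ • cu + k₂ • cw = 0
    · obtain ⟨k₁, k₂, hk0, hk⟩ := hK
      have hker : ∀ z₁ z₂ : ℂ, z₁ • cu + z₂ • cw = 0 → k₂ * z₁ - k₁ * z₂ = 0 := by
        intro z₁ z₂ hz
        by_contra hδ
        have hcw0 : cw = 0 := by
          have comb : (z₁ * k₂ - k₁ * z₂) • cw
              = z₁ • (k₁ • cu + k₂ • cw) - k₁ • (z₁ • cu + z₂ • cw) := by
            module
          rw [hk, hz, smul_zero, smul_zero, sub_zero] at comb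
          have hδ' : z₁ * k₂ - k₁ * z₂ ≠ 0 := by
            intro h; apply hδ; linear_combination h
          exact (smul_eq_zero.mp comb).resolve_left hδ'
        have hcu0 : cu = 0 := by
          have comb : (z₂ * k₁ - k₂ * z₁) • cu
              = z₂ • (k₁ • cu + k₂ • cw) - k₂ • (z₁ • cu + z₂ • cw) := by
            module
          rw [hk, hz, smul_zero, smul_zero, sub_zero] at comb
          have hδ' : z₂ * k₁ - k₂ * z₁ ≠ 0 := by
            intro h; apply hδ; linear_combination -h
          exact (smul_eq_zero.mp comb).resolve_left hδ'
        apply hbq0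
        rw [← hp, hcu0, hcw0, smul_zero, smul_zero, add_zero]
      have hc0 : -(k₂ * p₁ - k₁ * p₂) ≠ 0 := by
        intro h
        have hδ : k₂ * p₁ = k₁ * p₂ := by linear_combination -h
        rcases not_and_or.mp hk0 with hk₁ | hk₂
        · apply hbq0
          rw [← hp]
          have hp₂ : p₂ = k₂ * p₁ / k₁ := by
            field_simp
            linear_combination -hδ
          have hrw : p₁ • cu + p₂ • cw = (p₁ / k₁) • (k₁ • cu + k₂ • cw) := by
            rw [hp₂, smul_add, smul_smul, smul_smul, div_mul_cancel₀ _ hk₁]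
            congr 1
            congr 1
            ring
          rw [hrw, hk, smul_zero]
        · apply hbq0
          rw [← hp]
          have hp₁ : p₁ = k₁ * p₂ / k₂ := by
            field_simp
            linear_combination hδ
          have hrw : p₁ • cu + p₂ • cw = (p₂ / k₂) • (k₁ • cu + k₂ • cw) := by
            rw [hp₁, smul_add, smul_smul, smul_smul, div_mul_cancel₀ _ hk₂]
            congr 1
            congr 1
            ring
          rw [hrw, hk, smul_zero]
      refine ⟨(-(k₂ * p₁ - k₁ * p₂), k₂, -k₁), hc0, ?_⟩
      intro s t hst
      have hz : (s - p₁) • cu + (t - p₂) • cw = 0 := by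
        have h3 : s • cu + t • cw = p₁ • cu + p₂ • cw := by
          rw [hp]
          exact (hcond s t).mp hst
        calc (s - p₁) • cu + (t - p₂) • cw
            = (s • cu + t • cw) - (p₁ • cu + p₂ • cw) := by module
          _ = 0 := by rw [h3, sub_self]
      have := hker _ _ hz
      simp only
      linear_combination this
    · have hK' : ∀ k₁ k₂ : ℂ, k₁ • cu + k₂ • cw = 0 → k₁ = 0 ∧ k₂ = 0 := by
        intro k₁ k₂ hrel
        by_contra hcon
        exact hK ⟨k₁, k₂, hcon, hrel⟩
      have hp00 : ¬(p₁ = 0 ∧ p₂ = 0) := by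
        rintro ⟨rfl, rfl⟩
        apply hbq0
        rw [← hp, zero_smul, zero_smul, add_zero]
      have huniq : ∀ s t : ℂ, s • cu + t • cw = bq → s = p₁ ∧ t = p₂ := by
        intro s t hst
        have hz : (s - p₁) • cu + (t - p₂) • cw = 0 := by
          calc (s - p₁) • cu + (t - p₂) • cw
              = (s • cu + t • cw) - (p₁ • cu + p₂ • cw) := by module
            _ = 0 := by rw [hst, hp, sub_self]
        obtain ⟨h1, h2⟩ := hK' _ _ hz
        exact ⟨by linear_combination h1, by linear_combination h2⟩
      rcases not_and_or.mp hp00 with hp₁ | hp₂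
      · refine ⟨(-p₁, 1, 0), neg_ne_zero.mpr hp₁, ?_⟩
        intro s t hst
        obtain ⟨hs, -⟩ := huniq s t ((hcond s t).mp hst)
        simp only
        linear_combination hs
      · refine ⟨(-p₂, 0, 1), neg_ne_zero.mpr hp₂, ?_⟩
        intro s t hst
        obtain ⟨-, hts⟩ := huniq s t ((hcond s t).mp hst)
        simp only
        linear_combination hts
  · refine ⟨(1, 0, 0), one_ne_zero, ?_⟩
    intro s t hst
    exact absurd ⟨s, t, (hcond s t).mp hst⟩ hT

end AuxSteinberg
section AuxJac
variable {n : ℕ}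

lemma eval_det_jac (x₀ : Fin n → MvPolynomial (Fin n) ℂ) (v : Fin n → ℂ) :
    eval v (Matrix.of fun α j => pderiv j (x₀ α)).det
      = (Matrix.of fun α j => eval v (pderiv j (x₀ α))).det := by
  rw [RingHom.map_det]
  congr 1

lemma steinberg_isUnit [NeZero n] (G : Subgroup (GL (Fin n) ℂ)) [Fintype ↥G]
    (d : Fin n → ℕ) (x₀ : Fin n → MvPolynomial (Fin n) ℂ) (hx₀ : BasicInvariants G d x₀)
    (q : Fin n → ℂ) (hreg : IsRegularVec G q) :
    IsUnit (Matrix.of fun α j => eval q (pderiv j (x₀ α))) := by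
  classical
  rw [Matrix.isUnit_iff_isUnit_det, isUnit_iff_ne_zero, ← eval_det_jac]
  set jac := (Matrix.of fun α j => pderiv j (x₀ α)).det with hjac
  have hfreejac : ∀ v : Fin n → ℂ, (∀ h : ↥G, h ≠ 1 → (h : GL (Fin n) ℂ).val *ᵥ v ≠ v) →
      eval v jac ≠ 0 := by
    intro v hv
    rw [hjac, eval_det_jac]
    rw [← isUnit_iff_ne_zero, ← Matrix.isUnit_iff_isUnit_det]
    exact isUnit_jacobian_of_free G d x₀ hx₀ v hv
  by_cases hfree : ∀ h : ↥G, h ≠ 1 → (h : GL (Fin n) ℂ).val *ᵥ q ≠ q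
  · exact hfreejac q hfree
  push_neg at hfree
  obtain ⟨g₀, hg₀ne, hg₀fix⟩ := hfree
  have hcoene : ∀ h : ↥G, h ≠ 1 → (h : GL (Fin n) ℂ) ≠ 1 := by
    intro h hne hc
    exact hne (Subtype.ext hc)
  have hstabnr : ∀ h : ↥G, h ≠ 1 → (h : GL (Fin n) ℂ).val *ᵥ q = q →
      ¬ IsReflection (h : GL (Fin n) ℂ) := by
    intro h hne hfix hrefl
    exact hreg.2 (h : GL (Fin n) ℂ) h.2 hrefl hfix
  set S : Finset ↥G :=
    Finset.univ.filter (fun h : ↥G => h ≠ 1 ∧ (h : GL (Fin n) ℂ).val *ᵥ q = q) with hS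
  set 𝒮 : Finset (Subspace ℂ (Fin n → ℂ)) :=
    S.image (fun h : ↥G => LinearMap.ker (Matrix.toLin' ((h : GL (Fin n) ℂ).val - 1))) with h𝒮def
  have h𝒮 : ∀ W ∈ 𝒮, Module.finrank ℂ W + 2 ≤ n := by
    intro W hW
    obtain ⟨h, hh, rfl⟩ := Finset.mem_image.mp hW
    obtain ⟨hne, hfix⟩ := (Finset.mem_filter.mp hh).2
    exact fix_subspace_small (hcoene h hne) (hstabnr h hne hfix)
  obtain ⟨u, w, hplane⟩ := exists_plane 𝒮 h𝒮
  set σB : Fin n → Bi := fun i =>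
    Polynomial.C (Polynomial.C (q i))
      + Polynomial.C (Polynomial.C (u i)) * Polynomial.C Polynomial.X
      + Polynomial.C (Polynomial.C (w i)) * Polynomial.X with hσB
  set Ψ : MvPolynomial (Fin n) ℂ →+* Bi :=
    MvPolynomial.eval₂Hom ((Polynomial.C).comp Polynomial.C) σB with hΨ
  have hΨev : ∀ (s t : ℂ) (p : MvPolynomial (Fin n) ℂ),
      evB s t (Ψ p) = eval (q + s • u + t • w) p := by
    intro s t p
    have hhom : (evB s t).comp Ψ = (MvPolynomial.eval (q + s • u + t • w) : _ →+* ℂ) := by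
      apply MvPolynomial.ringHom_ext
      · intro r
        simp only [hΨ, RingHom.comp_apply, MvPolynomial.eval₂Hom_C]
        rw [evB_CC, MvPolynomial.eval_C]
      · intro i
        simp only [hΨ, RingHom.comp_apply, MvPolynomial.eval₂Hom_X', hσB]
        rw [map_add, map_add, _root_.map_mul, _root_.map_mul, evB_CC, evB_CC, evB_CC,
          evB_CX, evB_X]
        simp only [MvPolynomial.eval_X, Pi.add_apply, Pi.smul_apply, smul_eq_mul]
        ring
    exact DFunLike.congr_fun hhom p
  have hline : ∀ h : ↥G, ∃ cabv : ℂ × ℂ × ℂ, cabv.1 ≠ 0 ∧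
      ((h : GL (Fin n) ℂ).val *ᵥ q ≠ q → ∀ s t : ℂ,
        (h : GL (Fin n) ℂ).val *ᵥ (q + s • u + t • w) = q + s • u + t • w →
          cabv.1 + cabv.2.1 * s + cabv.2.2 * t = 0) := by
    intro h
    by_cases hfix : (h : GL (Fin n) ℂ).val *ᵥ q = q
    · exact ⟨(1, 0, 0), one_ne_zero, fun hc => absurd hfix hc⟩
    · obtain ⟨cabv, h1, h2⟩ := line_for_nonfix (h : GL (Fin n) ℂ).val q u w hfix
      exact ⟨cabv, h1, fun _ => h2⟩
  choose cab hcab1 hcab2 using hline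
  set L : Finset (ℂ × ℂ × ℂ) := Finset.univ.image cab with hLdef
  have hL : ∀ p ∈ L, p.1 ≠ 0 := by
    intro p hp
    obtain ⟨h, -, rfl⟩ := Finset.mem_image.mp hp
    exact hcab1 h
  have hcov : ∀ s t : ℂ, ¬(s = 0 ∧ t = 0) → evB s t (Ψ jac) = 0 →
      ∃ p ∈ L, p.1 + p.2.1 * s + p.2.2 * t = 0 := by
    intro s t hst hev
    rw [hΨev] at hev
    have hvfix : ∃ h : ↥G, h ≠ 1 ∧ (h : GL (Fin n) ℂ).val *ᵥ (q + s • u + t • w)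
        = q + s • u + t • w := by
      by_contra hcon
      push_neg at hcon
      exact hfreejac _ hcon hev
    obtain ⟨h, hne, hfix⟩ := hvfix
    by_cases hq : (h : GL (Fin n) ℂ).val *ᵥ q = q
    · exfalso
      have hsum : (h : GL (Fin n) ℂ).val *ᵥ (s • u + t • w) = s • u + t • w := by
        have h1 : (h : GL (Fin n) ℂ).val *ᵥ (q + s • u + t • w)
            = (h : GL (Fin n) ℂ).val *ᵥ q + (h : GL (Fin n) ℂ).val *ᵥ (s • u + t • w) := by
          rw [add_assoc, Matrix.mulVec_add]
        rw [hfix, hq] at h1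
        have h2 : q + (s • u + t • w) = q + (h : GL (Fin n) ℂ).val *ᵥ (s • u + t • w) := by
          rw [← add_assoc]
          exact h1
        exact (add_left_cancel h2).symm
      have hmem : s • u + t • w
          ∈ LinearMap.ker (Matrix.toLin' ((h : GL (Fin n) ℂ).val - 1)) := by
        rw [mulvec_fix_iff]
        exact hsum
      have hWmem : LinearMap.ker (Matrix.toLin' ((h : GL (Fin n) ℂ).val - 1)) ∈ 𝒮 :=
        Finset.mem_image.mpr ⟨h,
          Finset.mem_filter.mpr ⟨Finset.mem_univ h, hne, hq⟩, rfl⟩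
      exact hst (hplane _ hWmem s t hmem)
    · exact ⟨cab h, Finset.mem_image.mpr ⟨h, Finset.mem_univ h, rfl⟩, hcab2 h hq s t hfix⟩
  intro h0
  apply bivar_main (Ψ jac) L hL hcov
  have hq00 : q + (0:ℂ) • u + (0:ℂ) • w = q := by
    simp
  rw [hΨev, hq00]
  exact h0

end AuxJac
section AuxGraded
variable {n : ℕ}

lemma eval_coordPoly (P : GL (Fin n) ℂ) (α : Fin n) (y : Fin n → ℂ) :
    eval y (coordPoly P α) = ∑ j, P.val α j * y j := by
  rw [coordPoly, map_sum]
  apply Finset.sum_congr rfl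
  intro j _
  rw [_root_.map_mul, eval_C, eval_X]

lemma graded_matrix_id [NeZero n] {g : GL (Fin n) ℂ} {ζ : ℂ} {d : Fin n → ℕ} {P : GL (Fin n) ℂ}
    (hP : GradedCoords g ζ d P) :
    P.val * (g⁻¹).val = Matrix.diagonal (fun α => ζ ^ ((d α : ℤ) - 1)) * P.val := by
  ext α k
  have h2 := congrArg (eval (Pi.single k 1)) (hP α)
  rw [eval_pback, Matrix.mulVec_single] at h2
  rw [eval_coordPoly] at h2
  rw [_root_.map_mul, eval_C, eval_coordPoly] at h2
  have hL : ∑ j, P.val α j * (MulOpposite.op (1:ℂ) • (g⁻¹).val.col k) j = (P.val * (g⁻¹).val) α k := by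
    rw [Matrix.mul_apply]
    apply Finset.sum_congr rfl
    intro j _
    simp
  have hR : ∑ j, P.val α j * (Pi.single k 1 : Fin n → ℂ) j = P.val α k := by
    calc ∑ j, P.val α j * (Pi.single k 1 : Fin n → ℂ) j
        = ∑ j, (if j = k then P.val α j else 0) := by
          apply Finset.sum_congr rfl
          intro j _
          by_cases hj : j = k
          · subst hj; rw [Pi.single_eq_same, mul_one, if_pos rfl]
          · rw [Pi.single_eq_of_ne hj, mul_zero, if_neg hj]
      _ = P.val α k := by simp
  rw [hL, hR] at h2
  rw [h2, Matrix.diagonal_mul]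

end AuxGraded
theorem stmt_5 [NeZero n] (G : Subgroup (GL (Fin n) ℂ)) (hG : IsReflectionGroup G)
    (d : Fin n → ℕ) (hd : Antitone d)
    (x₀ : Fin n → MvPolynomial (Fin n) ℂ) (hx₀ : BasicInvariants G d x₀)
    (g : GL (Fin n) ℂ) (ζ : ℂ) (q : Fin n → ℂ) (hT : AdmissibleTriplet G d g ζ q)
    (P : GL (Fin n) ℂ) (hP : GradedCoords g ζ d P) :
    ∃ x : Fin n → MvPolynomial (Fin n) ℂ, BasicInvariants G d x ∧ Compatible P q x := by
  classical
  obtain ⟨hGfin, -⟩ := hG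
  letI : Finite ↥G := hGfin
  letI : Fintype ↥G := Fintype.ofFinite ↥G
  obtain ⟨hgG, -⟩ := hT.reg
  have hζ0 : ζ ≠ 0 := by
    intro h
    have h1 := hT.prim.pow_eq_one
    rw [h, zero_pow (hx₀.pos 0).ne'] at h1
    exact one_ne_zero h1.symm
  -- matrix facts about P and g
  have hPPinv : P.val * (P⁻¹).val = 1 := P.mul_inv
  have hPinvP : (P⁻¹).val * P.val = 1 := P.inv_mul
  -- the Jacobian in the u-coordinates at q, invertible by Steinberg's argument
  set A : Matrix (Fin n) (Fin n) ℂ := Matrix.of (fun α j => eval q (pderiv j (x₀ α))) with hA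
  have hAunit : IsUnit A := steinberg_isUnit G d x₀ hx₀ q hT.regq
  set B : Matrix (Fin n) (Fin n) ℂ := A * (P⁻¹).val with hB
  have hBdet : IsUnit B.det := by
    rw [hB, Matrix.det_mul]
    exact ((Matrix.isUnit_iff_isUnit_det A).mp hAunit).mul
      ((Matrix.isUnit_iff_isUnit_det _).mp (P⁻¹).isUnit)
  -- B is the z-coordinate Jacobian at q
  have hBeq : ∀ α β, B α β = eval (P.val *ᵥ q) (pderiv β (pback (P⁻¹).val (x₀ α))) := by
    intro α β
    rw [pderiv_pback, map_sum]
    have hterm : ∀ j, eval (P.val *ᵥ q) (C ((P⁻¹).val j β) * pback (P⁻¹).val (pderiv j (x₀ α)))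
        = A α j * (P⁻¹).val j β := by
      intro j
      rw [_root_.map_mul, eval_C, eval_pback, Matrix.mulVec_mulVec, hPinvP, Matrix.one_mulVec]
      rw [hA]
      simp only [Matrix.of_apply]
      ring
    rw [Finset.sum_congr rfl fun j _ => hterm j]
    rw [hB, Matrix.mul_apply]
  -- the diagonal scaling matrix
  set D : Matrix (Fin n) (Fin n) ℂ := Matrix.diagonal (fun α => ζ ^ ((d α : ℤ) - 1)) with hD
  have hmat : P.val * (g⁻¹).val = D * P.val := graded_matrix_id hP
  have hPiD : (P⁻¹).val * D = (g⁻¹).val * (P⁻¹).val := by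
    have h1 : D = P.val * (g⁻¹).val * (P⁻¹).val := by
      rw [hmat, Matrix.mul_assoc, hPPinv, Matrix.mul_one]
    rw [h1, ← Matrix.mul_assoc, ← Matrix.mul_assoc, hPinvP, Matrix.one_mul]
  have hYinv : ∀ α, pback D (pback (P⁻¹).val (x₀ α)) = pback (P⁻¹).val (x₀ α) := by
    intro α
    rw [pback_pback, hPiD, ← pback_pback]
    congr 1
    exact hx₀.invariant g⁻¹ (inv_mem hgG) α
  have hrel : ∀ α β, pderiv β (pback (P⁻¹).val (x₀ α))
      = C (ζ ^ ((d β : ℤ) - 1)) * pback D (pderiv β (pback (P⁻¹).val (x₀ α))) := by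
    intro α β
    conv_lhs => rw [← hYinv α]
    rw [pderiv_pback]
    rw [Finset.sum_eq_single β]
    · rw [hD, Matrix.diagonal_apply_eq]
    · intro j _ hj
      rw [hD, Matrix.diagonal_apply_ne _ hj, map_zero, zero_mul]
    · intro h
      exact absurd (Finset.mem_univ β) h
  -- eigenvector facts
  have hginvq : (g⁻¹).val *ᵥ q = ζ⁻¹ • q := by
    have h1 : (g⁻¹).val *ᵥ (g.val *ᵥ q) = q := by
      rw [Matrix.mulVec_mulVec, g.inv_mul, Matrix.one_mulVec]
    rw [hT.eig, Matrix.mulVec_smul] at h1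
    have h2 := congrArg (fun z => ζ⁻¹ • z) h1
    rw [smul_smul, inv_mul_cancel₀ hζ0, one_smul] at h2
    rw [h2]
  have hDz : D *ᵥ (P.val *ᵥ q) = ζ⁻¹ • (P.val *ᵥ q) := by
    rw [Matrix.mulVec_mulVec, ← hmat, ← Matrix.mulVec_mulVec, hginvq, Matrix.mulVec_smul]
  have hYhom : ∀ α, (pback (P⁻¹).val (x₀ α)).IsHomogeneous (d α) :=
    fun α => pback_isHomogeneous _ (hx₀.homog α)
  -- block-diagonality of B
  have hblock : ∀ α β, d α ≠ d β → B α β = 0 := by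
    intro α β hne
    have h1 : B α β = ζ ^ ((d β : ℤ) - 1) * ((ζ⁻¹) ^ (d α - 1) * B α β) := by
      rw [hBeq α β]
      conv_lhs => rw [hrel α β]
      rw [_root_.map_mul, eval_C, eval_pback, hDz,
        eval_smul_homog (isHomogeneous_pderiv (hYhom α) β), ← hBeq α β]
    have h3 : (1 - ζ ^ ((d β : ℤ) - 1) * (ζ⁻¹) ^ (d α - 1)) * B α β = 0 := by
      linear_combination h1
    rcases mul_eq_zero.mp h3 with hc | hc
    · exfalso
      have hc1 : ζ ^ ((d β : ℤ) - 1) * (ζ⁻¹) ^ (d α - 1) = 1 := by linear_combination -hc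
      have he : ζ ^ ((d β : ℤ) - 1) * (ζ⁻¹) ^ (d α - 1) = ζ ^ ((d β : ℤ) - (d α : ℤ)) := by
        rw [inv_pow, ← zpow_natCast ζ (d α - 1), ← _root_.zpow_neg, ← zpow_add₀ hζ0]
        congr 1
        have hcast : ((d α - 1 : ℕ) : ℤ) = (d α : ℤ) - 1 := by
          have := hx₀.pos α
          omega
        rw [hcast]
        ring
      have hzpow : ζ ^ ((d β : ℤ) - (d α : ℤ)) = 1 := by rw [← he, hc1]
      obtain ⟨k, hk⟩ := (hT.prim.zpow_eq_one_iff_dvd _).mp hzpow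
      have hβle : d β ≤ d 0 := hd (Fin.zero_le β)
      have hαle : d α ≤ d 0 := hd (Fin.zero_le α)
      have hαpos := hx₀.pos α
      have hβpos := hx₀.pos β
      have hd0pos : (0:ℤ) < (d 0 : ℤ) := by exact_mod_cast hx₀.pos 0
      have hup : (d β : ℤ) - (d α : ℤ) < (d 0 : ℤ) := by
        have h5 : (d β : ℤ) ≤ (d 0 : ℤ) := by exact_mod_cast hβle
        have h6 : (1:ℤ) ≤ (d α : ℤ) := by exact_mod_cast hαpos
        omega
      have hlo : -(d 0 : ℤ) < (d β : ℤ) - (d α : ℤ) := by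
        have h5 : (d α : ℤ) ≤ (d 0 : ℤ) := by exact_mod_cast hαle
        have h6 : (1:ℤ) ≤ (d β : ℤ) := by exact_mod_cast hβpos
        omega
      rcases lt_trichotomy k 0 with hk0 | hk0 | hk0
      · have h7 : (d 0 : ℤ) * k ≤ -(d 0 : ℤ) := by nlinarith
        omega
      · rw [hk0, mul_zero] at hk
        have : d β = d α := by omega
        exact hne this.symm
      · have h7 : (d 0 : ℤ) ≤ (d 0 : ℤ) * k := by nlinarith
        omega
    · exact hc
  -- inverse matrix
  set Binv : Matrix (Fin n) (Fin n) ℂ := B⁻¹ with hBinvdef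
  have hBB : B * Binv = 1 := Matrix.mul_nonsing_inv B hBdet
  have hBB' : Binv * B = 1 := Matrix.nonsing_inv_mul B hBdet
  have hBinvblock : ∀ α β, d α ≠ d β → Binv α β = 0 := by
    set C' : Matrix (Fin n) (Fin n) ℂ :=
      Matrix.of (fun α β => if d α = d β then Binv α β else 0) with hC'
    have hBC : B * C' = 1 := by
      ext α β
      rw [Matrix.mul_apply]
      by_cases hab : d α = d β
      · have hterm : ∀ γ, B α γ * C' γ β = B α γ * Binv γ β := by
          intro γ
          by_cases hgb : d γ = d β
          · rw [hC']
            simp only [Matrix.of_apply]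
            rw [if_pos hgb]
          · rw [hC']
            simp only [Matrix.of_apply]
            rw [if_neg hgb, mul_zero,
              hblock α γ (fun hh => hgb (hh.symm.trans hab)), zero_mul]
        rw [Finset.sum_congr rfl fun γ _ => hterm γ, ← Matrix.mul_apply, hBB]
      · have hterm : ∀ γ, B α γ * C' γ β = 0 := by
          intro γ
          by_cases hgb : d γ = d β
          · rw [hblock α γ (fun hh => hab (hh.trans hgb)), zero_mul]
          · rw [hC']
            simp only [Matrix.of_apply]
            rw [if_neg hgb, mul_zero]
        rw [Finset.sum_congr rfl fun γ _ => hterm γ, Finset.sum_const_zero,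
          Matrix.one_apply_ne (fun hh => hab (by rw [hh]))]
    have hCeq : B⁻¹ = C' := Matrix.inv_eq_right_inv hBC
    intro α β hne
    rw [hBinvdef, hCeq, hC']
    simp only [Matrix.of_apply]
    rw [if_neg hne]
  -- the new invariants
  set x : Fin n → MvPolynomial (Fin n) ℂ := fun α => ∑ β, C (Binv α β) * x₀ β with hx
  have hpbx : ∀ (M : Matrix (Fin n) (Fin n) ℂ) (α), pback M (x α) = ∑ β, C (Binv α β) * pback M (x₀ β) := by
    intro M α
    rw [hx]
    rw [map_sum]
    apply Finset.sum_congr rfl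
    intro β _
    rw [_root_.map_mul, pback_C]
  refine ⟨x, ⟨hx₀.pos, ?_, ?_, ?_, ?_⟩, ?_⟩
  · -- homogeneous
    intro α
    rw [hx]
    apply MvPolynomial.IsHomogeneous.sum
    intro β _
    by_cases hβα : d β = d α
    · have := (hx₀.homog β).C_mul (Binv α β)
      rwa [hβα] at this
    · rw [hBinvblock α β (fun hh => hβα hh.symm), map_zero, zero_mul]
      exact isHomogeneous_zero _ _ _
  · -- invariant
    intro g' hg' α
    rw [hpbx]
    rw [hx]
    apply Finset.sum_congr rfl
    intro β _
    rw [hx₀.invariant g' hg' β]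
  · -- algebraically independent
    rw [algebraicIndependent_iff_injective_aeval]
    have hcomp : (MvPolynomial.aeval x :
          MvPolynomial (Fin n) ℂ →ₐ[ℂ] MvPolynomial (Fin n) ℂ)
        = (MvPolynomial.aeval x₀).comp (pback Binv) := by
      apply MvPolynomial.algHom_ext
      intro α
      simp only [aeval_X, AlgHom.comp_apply]
      rw [pback_X, map_sum]
      rw [hx]
      apply Finset.sum_congr rfl
      intro β _
      rw [_root_.map_mul, aeval_C, aeval_X, MvPolynomial.algebraMap_eq]
    rw [hcomp]
    have hco : ⇑((MvPolynomial.aeval x₀).comp (pback Binv))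
        = ⇑(MvPolynomial.aeval (R := ℂ) x₀) ∘ ⇑(pback Binv) := rfl
    rw [hco]
    apply Function.Injective.comp
    · exact algebraicIndependent_iff_injective_aeval.mp hx₀.indep
    · intro F1 F2 hF
      have h1 := congrArg (pback B) hF
      rw [pback_pback, pback_pback, hBB', pback_one, pback_one] at h1
      exact h1
  · -- generating
    intro F hFinv
    have h1 := hx₀.gen F hFinv
    have hsub : Set.range x₀ ⊆ (Algebra.adjoin ℂ (Set.range x) : Subalgebra ℂ _) := by
      rintro _ ⟨α, rfl⟩
      have hx0eq : x₀ α = ∑ γ, C (B α γ) * x γ := by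
        have hswap : ∑ γ, C (B α γ) * x γ = ∑ β, C ((B * Binv) α β) * x₀ β := by
          rw [hx]
          simp only [Finset.mul_sum]
          rw [Finset.sum_comm]
          apply Finset.sum_congr rfl
          intro β _
          rw [Matrix.mul_apply, map_sum, Finset.sum_mul]
          apply Finset.sum_congr rfl
          intro γ _
          rw [C_mul]
          ring
        rw [hswap, hBB]
        have hone : ∀ β, C ((1 : Matrix (Fin n) (Fin n) ℂ) α β) * x₀ β
            = if β = α then x₀ β else 0 := by
          intro β
          by_cases hβ : β = α
          · subst hβ
            rw [Matrix.one_apply_eq, _root_.map_one, one_mul, if_pos rfl]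
          · rw [Matrix.one_apply_ne (fun hh => hβ hh.symm), map_zero, zero_mul, if_neg hβ]
        rw [Finset.sum_congr rfl fun β _ => hone β, Finset.sum_ite_eq' Finset.univ α]
        simp
      rw [hx0eq]
      apply Subalgebra.sum_mem
      intro γ _
      apply Subalgebra.mul_mem
      · have : C (B α γ) = algebraMap ℂ (MvPolynomial (Fin n) ℂ) (B α γ) := by
          rw [MvPolynomial.algebraMap_eq]
        rw [this]
        exact Subalgebra.algebraMap_mem _ _
      · exact Algebra.subset_adjoin ⟨γ, rfl⟩
    exact Algebra.adjoin_le hsub h1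
  · -- compatible
    intro α β
    rw [zderivAt_unitIdx, hpbx, map_sum, map_sum]
    have hterm : ∀ γ, eval (P.val *ᵥ q) (pderiv β (C (Binv α γ) * pback (P⁻¹).val (x₀ γ)))
        = Binv α γ * B γ β := by
      intro γ
      rw [pderiv_C_mul, _root_.map_mul, eval_C, ← hBeq γ β]
    rw [Finset.sum_congr rfl fun γ _ => hterm γ, ← Matrix.mul_apply, hBB', Matrix.one_apply]

end
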